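/- arXiv:1903.00330 — 2 statements merged into one kernel-verified Lean document; each statement's English description precedes it below -/
import Mathlib

section
/- For a Randers metric F with navigation data (h, W), ‖W‖_h < 1, the dual (co-)metric of F on the cotangent space is F*(ξ) = √(h^{ij} ξ_i ξ_j) + w^i ξ_i, i.e. F* = h* + ⟨W, ·⟩ evaluated on covectors. -/
/-!
On the Randers indicatrix `F = 1` the defining equation squares to `‖y - W‖ = 1`, so the
indicatrix is the `h`-unit sphere translated by `W` (Zermelo navigation). A linear form
`⟪u, ·⟫` attains its maximum `‖u‖` on the unit sphere, hence `⟪u, W⟫ + ‖u‖` on its translate.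
-/

open scoped RealInnerProductSpace
open Metric

section

variable {V : Type*} [NormedAddCommGroup V] [InnerProductSpace ℝ V]

theorem isGreatest_image_inner_sphere [Nontrivial V] (u c : V) {r : ℝ} (hr : 0 ≤ r) :
    IsGreatest ((fun y => ⟪u, y⟫) '' sphere c r) (r * ‖u‖ + ⟪u, c⟫) := by
  refine ⟨?_, ?_⟩
  · obtain ⟨v, hv, huv⟩ : ∃ v : V, ‖v‖ = r ∧ ⟪u, v⟫ = r * ‖u‖ := by
      rcases eq_or_ne u 0 with rfl | hu
      · obtain ⟨v, hv⟩ := exists_norm_eq V hr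
        exact ⟨v, hv, by simp⟩
      · have hu' : ‖u‖ ≠ 0 := norm_ne_zero_iff.2 hu
        refine ⟨(r / ‖u‖) • u, ?_, ?_⟩
        · rw [norm_smul, Real.norm_of_nonneg (by positivity), div_mul_cancel₀ _ hu']
        · rw [real_inner_smul_right, real_inner_self_eq_norm_sq]
          field_simp
    refine ⟨c + v, by simpa [mem_sphere_iff_norm] using hv, ?_⟩
    simp only [inner_add_right, huv]
    ring
  · rintro _ ⟨y, hy, rfl⟩
    rw [mem_sphere_iff_norm] at hy
    calc ⟪u, y⟫ = ⟪u, y - c⟫ + ⟪u, c⟫ := by rw [inner_sub_right]; ring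
      _ ≤ ‖u‖ * ‖y - c‖ + ⟪u, c⟫ := by gcongr; exact real_inner_le_norm u (y - c)
      _ = r * ‖u‖ + ⟪u, c⟫ := by rw [hy, mul_comm]

noncomputable def randersNorm (W y : V) : ℝ :=
  (√((1 - ‖W‖ ^ 2) * ⟪y, y⟫ + ⟪W, y⟫ ^ 2) - ⟪W, y⟫) / (1 - ‖W‖ ^ 2)

theorem randersNorm_eq_one_iff {W : V} (hW : ‖W‖ < 1) (y : V) :
    randersNorm W y = 1 ↔ y ∈ sphere W 1 := by
  set lam := 1 - ‖W‖ ^ 2 with hlam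
  have hlam_pos : 0 < lam := by nlinarith [norm_nonneg W]
  have hsphere : y ∈ sphere W 1 ↔ ‖y‖ ^ 2 = lam + 2 * ⟪W, y⟫ := by
    rw [mem_sphere_iff_norm, ← pow_eq_one_iff_of_nonneg (norm_nonneg _) two_ne_zero,
      norm_sub_sq_real, real_inner_comm]
    constructor <;> intro h <;> linarith
  have hrad : 0 ≤ lam * ‖y‖ ^ 2 + ⟪W, y⟫ ^ 2 := by positivity
  rw [randersNorm, ← hlam, div_eq_one_iff_eq hlam_pos.ne', sub_eq_iff_eq_add,
    real_inner_self_eq_norm_sq, hsphere]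
  constructor
  · intro h
    have hsq := Real.sq_sqrt hrad
    rw [h] at hsq
    have : lam * (‖y‖ ^ 2 - lam - 2 * ⟪W, y⟫) = 0 := by linarith
    linarith [(mul_eq_zero.1 this).resolve_left hlam_pos.ne']
  · intro h
    -- Cauchy–Schwarz on the sphere gives `⟪W, y⟫ ≥ ‖W‖² - ‖W‖`, so `lam + ⟪W, y⟫ ≥ 1 - ‖W‖ > 0`.
    have hy : ‖y - W‖ = 1 := by rwa [← mem_sphere_iff_norm, hsphere]
    have hcs : -(‖W‖ * ‖y - W‖) ≤ ⟪W, y - W⟫ := neg_le_of_abs_le (abs_real_inner_le_norm W _)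
    rw [hy, inner_sub_right, real_inner_self_eq_norm_sq] at hcs
    rw [Real.sqrt_eq_iff_mul_self_eq hrad (by nlinarith), h]
    ring

end

theorem stmt1_general (V : Type*) [NormedAddCommGroup V] [InnerProductSpace ℝ V]
    [Nontrivial V]
    (W : V) (hW : ‖W‖ < 1) (lam : ℝ) (hlam : lam = 1 - ‖W‖ ^ 2)
    (F : V → ℝ)
    (hF : ∀ y, F y = (Real.sqrt (lam * ⟪y, y⟫ + ⟪W, y⟫ ^ 2) - ⟪W, y⟫) / lam)
    (u : V) :
    sSup {r : ℝ | ∃ y : V, F y = 1 ∧ r = ⟪u, y⟫} = ‖u‖ + ⟪u, W⟫ := by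
  have hF' : F = randersNorm W := funext fun y => by rw [hF, hlam, randersNorm]
  have hset : {r : ℝ | ∃ y : V, F y = 1 ∧ r = ⟪u, y⟫} = (fun y => ⟪u, y⟫) '' sphere W 1 := by
    ext r
    simp only [hF', randersNorm_eq_one_iff hW, Set.mem_ofPred_eq, Set.mem_image, eq_comm]
  rw [hset, (isGreatest_image_inner_sphere u W zero_le_one).csSup_eq, one_mul]

theorem stmt1 (V : Type*) [NormedAddCommGroup V] [InnerProductSpace ℝ V]
    [FiniteDimensional ℝ V] [Nontrivial V]
    (W : V) (hW : ‖W‖ < 1) (lam : ℝ) (hlam : lam = 1 - ‖W‖ ^ 2)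
    (F : V → ℝ)
    (hF : ∀ y, F y = (Real.sqrt (lam * ⟪y, y⟫ + ⟪W, y⟫ ^ 2) - ⟪W, y⟫) / lam)
    (u : V) :
    sSup {r : ℝ | ∃ y : V, F y = 1 ∧ r = ⟪u, y⟫} = ‖u‖ + ⟪u, W⟫ :=
  stmt1_general V W hW lam hlam F hF u
end

section
/- Restricted to vectors y of fixed F-norm F(y)=1, the fundamental tensor of a Randers metric with navigation data (h,W) satisfies g_{ij}(y) v^i v^j = (1/(λα(y)))·h_{ij} v^i v^j for all v with ⟨L(y), v⟩ = 0, i.e. g_y agrees with h/(λα(y)) on the g_y-orthogonal complement of y. -/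
/-!
Write `F = (R - ⟪W, ·⟫) / λ` with `R = √Q` and `Q u = λ⟪u, u⟫ + ⟪W, u⟫²`. For any `C²` function
`f`, the second derivative of `f² / 2` is `(df v)² + f · d²f (v, v)`. Applied to `F` at `y`, where
`F y = 1` and the Legendre condition `F y · dF_y v = 0` gives `dF_y v = 0` (that is,
`dR_y v = ⟪W, v⟫`), this yields `g_y (v, v) = d²R_y (v, v) / λ`. Applied to `R`, whose square is
the quadratic form `Q`, it yields `(dR_y v)² + R y · d²R_y (v, v) = λ⟪v, v⟫ + ⟪W, v⟫²`, hence
`R y · d²R_y (v, v) = λ⟪v, v⟫`; finally `R y = λ α y`.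
-/

open scoped RealInnerProductSpace

theorem mul_sqrt_div_sq {c : ℝ} (hc : 0 < c) (x : ℝ) : c * √(x / c ^ 2) = √x := by
  rw [Real.sqrt_div' _ (sq_nonneg c), Real.sqrt_sq hc.le]
  field_simp

section SecondDerivative

variable {E : Type*} [NormedAddCommGroup E] [NormedSpace ℝ E] {f : E → ℝ} {y : E}

theorem fderiv_sq_div_two_apply (hf : DifferentiableAt ℝ f y) (w : E) :
    fderiv ℝ (fun u => f u ^ 2 / 2) y w = f y * fderiv ℝ f y w := by
  simp_rw [div_eq_mul_inv]
  rw [((hf.hasFDerivAt.pow 2).mul_const 2⁻¹).fderiv]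
  simp only [smul_apply, smul_eq_mul]
  push_cast
  ring

theorem ContDiffAt.differentiableAt_fderiv_apply (hf : ContDiffAt ℝ 2 f y) (w : E) :
    DifferentiableAt ℝ (fun z => fderiv ℝ f z w) y :=
  ((hf.fderiv_right (m := 1) le_rfl).differentiableAt one_ne_zero).clm_apply
    (differentiableAt_const w)

theorem fderiv_fderiv_sq_div_two_apply (hf : ContDiffAt ℝ 2 f y) (v w : E) :
    fderiv ℝ (fun z => fderiv ℝ (fun u => f u ^ 2 / 2) z w) y v =
      fderiv ℝ f y v * fderiv ℝ f y w + f y * fderiv ℝ (fun z => fderiv ℝ f z w) y v := by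
  have hfirst : (fun z => fderiv ℝ (fun u => f u ^ 2 / 2) z w) =ᶠ[nhds y]
      fun z => f z * fderiv ℝ f z w := by
    filter_upwards [hf.eventually (by simp)] with z hz
    exact fderiv_sq_div_two_apply (hz.differentiableAt two_ne_zero) w
  rw [hfirst.fderiv_eq, fderiv_fun_mul (hf.differentiableAt two_ne_zero)
    (hf.differentiableAt_fderiv_apply w)]
  simp only [add_apply, smul_apply, smul_eq_mul]
  ring

theorem fderiv_sub_clm_div_apply (hf : DifferentiableAt ℝ f y) (ℓ : E →L[ℝ] ℝ) (c : ℝ) (w : E) :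
    fderiv ℝ (fun u => (f u - ℓ u) / c) y w = (fderiv ℝ f y w - ℓ w) / c := by
  simp_rw [div_eq_mul_inv]
  rw [((hf.hasFDerivAt.fun_sub ℓ.hasFDerivAt).mul_const c⁻¹).fderiv]
  simp [mul_comm]

theorem fderiv_fderiv_sub_clm_div_apply (hf : ContDiffAt ℝ 2 f y) (ℓ : E →L[ℝ] ℝ) (c : ℝ)
    (v w : E) :
    fderiv ℝ (fun z => fderiv ℝ (fun u => (f u - ℓ u) / c) z w) y v =
      fderiv ℝ (fun z => fderiv ℝ f z w) y v / c := by
  have hfirst : (fun z => fderiv ℝ (fun u => (f u - ℓ u) / c) z w) =ᶠ[nhds y]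
      fun z => (fderiv ℝ f z w - ℓ w) / c := by
    filter_upwards [hf.eventually (by simp)] with z hz
    exact fderiv_sub_clm_div_apply (hz.differentiableAt two_ne_zero) ℓ c w
  rw [hfirst.fderiv_eq]
  simp_rw [div_eq_mul_inv]
  rw [(((hf.differentiableAt_fderiv_apply w).hasFDerivAt.sub_const (ℓ w)).mul_const c⁻¹).fderiv]
  simp [mul_comm]

theorem fderiv_fderiv_div_two_eq_of_sqrt {q : E → ℝ} (hq : ContDiffAt ℝ 2 q y) (hqy : q y ≠ 0)
    (hq_nonneg : ∀ u, 0 ≤ q u) (v w : E) :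
    fderiv ℝ (fun z => fderiv ℝ (fun u => q u / 2) z w) y v =
      fderiv ℝ (fun u => √(q u)) y v * fderiv ℝ (fun u => √(q u)) y w +
        √(q y) * fderiv ℝ (fun z => fderiv ℝ (fun u => √(q u)) z w) y v := by
  have hsq : (fun u => q u / 2) = fun u => √(q u) ^ 2 / 2 := by
    funext u; rw [Real.sq_sqrt (hq_nonneg u)]
  rw [hsq, fderiv_fderiv_sq_div_two_apply (hq.sqrt hqy)]

end SecondDerivative

section Randers

variable {V : Type*} [NormedAddCommGroup V] [InnerProductSpace ℝ V]

theorem randers_radicand_nonneg (W : V) {lam : ℝ} (hlam : 0 ≤ lam) (u : V) :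
    0 ≤ lam * ⟪u, u⟫ + ⟪W, u⟫ ^ 2 := by
  have := real_inner_self_nonneg (x := u)
  positivity

theorem randers_radicand_pos (W : V) {lam : ℝ} (hlam : 0 ≤ lam) {y : V}
    (hy : 0 < √(lam * ⟪y, y⟫ + ⟪W, y⟫ ^ 2) - ⟪W, y⟫) :
    0 < lam * ⟪y, y⟫ + ⟪W, y⟫ ^ 2 := by
  refine (randers_radicand_nonneg W hlam y).lt_of_ne fun h => ?_
  have hWy : ⟪W, y⟫ = 0 := by
    have := mul_nonneg hlam (real_inner_self_nonneg (x := y))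
    nlinarith [sq_nonneg ⟪W, y⟫]
  rw [← h, Real.sqrt_zero, hWy, sub_zero] at hy
  exact hy.false

theorem contDiff_randers_radicand (W : V) (lam : ℝ) {n : WithTop ℕ∞} :
    ContDiff ℝ n fun u : V => lam * ⟪u, u⟫ + ⟪W, u⟫ ^ 2 :=
  (contDiff_const.mul (contDiff_id.inner ℝ contDiff_id)).add
    ((contDiff_const.inner ℝ contDiff_id).pow 2)

theorem hasFDerivAt_randers_radicand_div_two (W : V) (lam : ℝ) (z : V) :
    HasFDerivAt (fun u : V => (lam * ⟪u, u⟫ + ⟪W, u⟫ ^ 2) / 2)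
      (lam • innerSL ℝ z + ⟪W, z⟫ • innerSL ℝ W) z := by
  have h := (((hasStrictFDerivAt_norm_sq z).hasFDerivAt.const_mul lam).add
    ((innerSL ℝ W).hasFDerivAt.pow 2)).mul_const (2⁻¹ : ℝ)
  simp only [innerSL_apply_apply, ← real_inner_self_eq_norm_sq, ← div_eq_mul_inv] at h
  refine h.congr_fderiv ?_
  ext u
  simp only [Nat.add_one_sub_one, pow_one, nsmul_eq_mul, Nat.cast_ofNat, smul_add,
    add_apply, smul_apply, coe_innerSL_apply, smul_eq_mul]
  ring

theorem fderiv_fderiv_randers_radicand_div_two (W : V) (lam : ℝ) (y v w : V) :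
    fderiv ℝ (fun z => fderiv ℝ (fun u : V => (lam * ⟪u, u⟫ + ⟪W, u⟫ ^ 2) / 2) z w) y v =
      lam * ⟪v, w⟫ + ⟪W, v⟫ * ⟪W, w⟫ := by
  have hfirst : (fun z => fderiv ℝ (fun u : V => (lam * ⟪u, u⟫ + ⟪W, u⟫ ^ 2) / 2) z w) =
      ⇑(lam • innerSL ℝ w + ⟪W, w⟫ • innerSL ℝ W) := by
    funext z
    rw [(hasFDerivAt_randers_radicand_div_two W lam z).fderiv]
    simp [real_inner_comm, mul_comm]
  rw [hfirst, ContinuousLinearMap.fderiv]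
  simp [real_inner_comm, mul_comm]

theorem sqrt_randers_radicand_mul_fderiv_fderiv (W : V) {lam : ℝ} (hlam : 0 ≤ lam) {y : V}
    (hy : 0 < lam * ⟪y, y⟫ + ⟪W, y⟫ ^ 2) (v : V) :
    √(lam * ⟪y, y⟫ + ⟪W, y⟫ ^ 2) *
        fderiv ℝ (fun z => fderiv ℝ (fun u => √(lam * ⟪u, u⟫ + ⟪W, u⟫ ^ 2)) z v) y v =
      lam * ⟪v, v⟫ + ⟪W, v⟫ ^ 2 -
        fderiv ℝ (fun u => √(lam * ⟪u, u⟫ + ⟪W, u⟫ ^ 2)) y v ^ 2 := by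
  have h := fderiv_fderiv_div_two_eq_of_sqrt (contDiff_randers_radicand W lam).contDiffAt
    hy.ne' (randers_radicand_nonneg W hlam) v v
  rw [fderiv_fderiv_randers_radicand_div_two] at h
  linear_combination -h

end Randers

theorem stmt5 (V : Type*) [NormedAddCommGroup V] [InnerProductSpace ℝ V]
    (W : V) (hW : ‖W‖ < 1) (lam : ℝ) (hlam : lam = 1 - ‖W‖ ^ 2)
    (F : V → ℝ)
    (hF : ∀ z, F z = (Real.sqrt (lam * ⟪z, z⟫ + ⟪W, z⟫ ^ 2) - ⟪W, z⟫) / lam)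
    (α : V → ℝ)
    (hα : ∀ z, α z = Real.sqrt ((lam * ⟪z, z⟫ + ⟪W, z⟫ ^ 2) / lam ^ 2))
    -- fundamental tensor of `F` with reference vector `y`
    (g : V → V → V → ℝ)
    (hg : ∀ y X Y, g y X Y =
      fderiv ℝ (fun z => fderiv ℝ (fun u => F u ^ 2 / 2) z Y) y X)
    (y : V) (hy : F y = 1) :
    ∀ v : V, fderiv ℝ (fun u => F u ^ 2 / 2) y v = 0 →
      g y v v = ⟪v, v⟫ / (lam * α y) := by
  intro v hv
  have hlam_pos : 0 < lam := by rw [hlam, sub_pos]; exact pow_lt_one₀ (norm_nonneg W) hW two_ne_zero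
  set Q : V → ℝ := fun u => lam * ⟪u, u⟫ + ⟪W, u⟫ ^ 2
  set R : V → ℝ := fun u => √(Q u)
  have hF_eq : F = fun u => (R u - innerSL ℝ W u) / lam := funext hF
  have hRy : R y - ⟪W, y⟫ = lam := by rwa [hF y, div_eq_one_iff_eq hlam_pos.ne'] at hy
  have hQy : 0 < Q y := randers_radicand_pos W hlam_pos.le (by rwa [hRy])
  have hR_smooth : ContDiffAt ℝ 2 R y :=
    (contDiff_randers_radicand W lam).contDiffAt.sqrt hQy.ne'
  have hF_smooth : ContDiffAt ℝ 2 F y := by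
    rw [hF_eq]
    exact (hR_smooth.sub (innerSL ℝ W).contDiff.contDiffAt).div_const lam
  have hdF : fderiv ℝ F y v = 0 := by
    rwa [fderiv_sq_div_two_apply (hF_smooth.differentiableAt two_ne_zero), hy, one_mul] at hv
  have hdR : fderiv ℝ R y v = ⟪W, v⟫ := by
    rw [hF_eq, fderiv_sub_clm_div_apply (hR_smooth.differentiableAt two_ne_zero),
      div_eq_zero_iff, sub_eq_zero] at hdF
    exact hdF.resolve_right hlam_pos.ne'
  have hR_sq : R y * fderiv ℝ (fun z => fderiv ℝ R z v) y v =
      lam * ⟪v, v⟫ + ⟪W, v⟫ ^ 2 - fderiv ℝ R y v ^ 2 :=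
    sqrt_randers_radicand_mul_fderiv_fderiv W hlam_pos.le hQy v
  have hαy : lam * α y = R y := by rw [hα y, mul_sqrt_div_sq hlam_pos]
  have hRy_pos : 0 < R y := Real.sqrt_pos.2 hQy
  rw [hg, fderiv_fderiv_sq_div_two_apply hF_smooth, hdF, hy, hF_eq,
    fderiv_fderiv_sub_clm_div_apply hR_smooth, hαy]
  rw [hdR] at hR_sq
  field_simp
  linarith
end
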